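/- Let c ∈ (0, c_crit), let s₀ ∈ (0, 1), and suppose h : [0, s₀] → [-1, 1] solves the transformed Jang equation dh/ds = F_c(s, h(s)) with h(0) = 0, |h(s)| < 1 for s ∈ [0, s₀), and h(s₀) = -1. Set u₀ := c(s₀ - 1)/2, and let f : [-c/2, u₀) → ℝ be the corresponding solution of Jang's equation on L_c with f(-c/2) = f'(-c/2) = 0, so that f'(u) = h(γ(u))/√(1 - h(γ(u))²) with γ(u) = (2/c)u + 1. Then there exist positive constants K and ε such that f'(u) ≥ -K/√(u₀ - u) for all u ∈ [u₀ - ε, u₀). -/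

import Mathlib

/-!
At `s₀` the solution reaches `h = -1`, where the right-hand side of the transformed equation is
`F_c(s₀, -1) = c²(s₀ - 1)/(8 m r_c(s₀)) < 0`; `r_c` is continuous because `φ` is strictly
increasing. So near `s₀` we have `h ≤ -1/2` and `h' ≤ -κ < 0`, hence `(1 - h²)' = -2 h h' ≤ -κ`,
and integrating back from `s₀` gives `1 - h(s)² ≥ κ (s₀ - s)`. Since `s₀ - s = (2/c)(u₀ - u)`,
this yields `f'(u) = h/√(1 - h²) ≥ -1/√(1 - h²) ≥ -K/√(u₀ - u)`.
-/

/-- The function `φ(r) = e^{r/(2m)-1}(r - 2m)` defining the Kruskal radius implicitly. -/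
noncomputable def phi (m r : ℝ) : ℝ := Real.exp (r / (2*m) - 1) * (r - 2*m)

/-- The derivative `φ_r(r) = (r/(2m)) e^{r/(2m)-1}`. -/
noncomputable def phiR (m r : ℝ) : ℝ := (r / (2*m)) * Real.exp (r / (2*m) - 1)

/-- The critical parameter `c_crit = √(8m/e)`. -/
noncomputable def cCrit (m : ℝ) : ℝ := Real.sqrt (8*m / Real.exp 1)

/-- The right-hand side of Jang's equation on the slice `L_c`:
`f''(u) = jangRHS m c u r (f'(u))` where `r = r(u)` solves `φ(r) = u(u+c)`. -/
noncomputable def jangRHS (m c u r p : ℝ) : ℝ :=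
  c * Real.sqrt (2*m / phiR m r + p^2/4) *
      ((1 / phiR m r) * (1/(2*m) - 3/r) - p^2/(2*m*r))
    - ((2*u + c)/(4*m*r)) * p^3
    - ((2*u + c)/(2 * phiR m r)) * (1/(2*m) + 5/r) * p

/-- The right-hand side `F_c(s,h)` of the transformed Jang equation,
with `r = r_c(s)` solving `φ(r) = (c²/4)(s²-1)`. -/
noncomputable def Fc (m c s r h : ℝ) : ℝ :=
  (c^2/2) * Real.sqrt (2*m*(1 - h^2) / phiR m r + h^2/4) *
      (((1 - h^2) / phiR m r) * (1/(2*m) - 3/r) - h^2/(2*m*r))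
    - (c^2*s/(8*m*r)) * h^3
    - (c^2*s/(4 * phiR m r)) * (1/(2*m) + 5/r) * (h*(1 - h^2))

open Set Filter Topology

section

variable {α β γ : Type*} [LinearOrder α] [TopologicalSpace α] [OrderTopology α]
  [LinearOrder β] [TopologicalSpace β] [OrderTopology β]

theorem StrictMonoOn.tendsto_of_tendsto_comp {φ : α → β} {S : Set α} (hφ : StrictMonoOn φ S)
    (hS : S.OrdConnected) {l : Filter γ} {R : γ → α} (hR : ∀ᶠ x in l, R x ∈ S) {a : α}
    (ha : a ∈ S) (hlim : Tendsto (fun x => φ (R x)) l (𝓝 (φ a))) : Tendsto R l (𝓝 a) := by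
  rw [tendsto_order]
  constructor
  · intro b hb
    by_cases hbS : b ∈ S
    · filter_upwards [hR, hlim.eventually (eventually_gt_nhds (hφ hbS ha hb))] with x hxS hx
      exact (hφ.lt_iff_lt hbS hxS).mp hx
    · filter_upwards [hR] with x hxS
      by_contra! hle
      exact hbS (hS.out hxS ha ⟨hle, hb.le⟩)
  · intro b hb
    by_cases hbS : b ∈ S
    · filter_upwards [hR, hlim.eventually (eventually_lt_nhds (hφ ha hbS hb))] with x hxS hx
      exact (hφ.lt_iff_lt hxS hbS).mp hx
    · filter_upwards [hR] with x hxS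
      by_contra! hle
      exact hbS (hS.out ha hxS ⟨hb.le, hle⟩)

end

theorem hasDerivAt_phi {m : ℝ} (hm : m ≠ 0) (r : ℝ) : HasDerivAt (phi m) (phiR m r) r := by
  have hlin : HasDerivAt (fun r : ℝ => r / (2 * m) - 1) (1 / (2 * m)) r := by
    simpa using ((hasDerivAt_id r).div_const (2 * m)).sub_const 1
  refine (hlin.exp.mul ((hasDerivAt_id r).sub_const (2 * m))).congr_deriv ?_
  unfold phiR
  simp only [id]
  field_simp
  ring

theorem phiR_pos {m r : ℝ} (hm : 0 < m) (hr : 0 < r) : 0 < phiR m r := by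
  unfold phiR
  positivity

theorem strictMonoOn_phi {m : ℝ} (hm : 0 < m) : StrictMonoOn (phi m) (Ioi 0) :=
  strictMonoOn_of_hasDerivWithinAt_pos (convex_Ioi 0)
    (fun r _ => (hasDerivAt_phi hm.ne' r).continuousAt.continuousWithinAt)
    (fun r _ => (hasDerivAt_phi hm.ne' r).hasDerivWithinAt)
    (fun r hr => phiR_pos hm (by simpa using hr))

theorem continuous_of_phi_eq {m : ℝ} (hm : 0 < m) {R g : ℝ → ℝ} (hg : Continuous g)
    (hR : ∀ s, 0 < R s ∧ phi m (R s) = g s) : Continuous R :=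
  continuous_iff_continuousAt.2 fun s =>
    (strictMonoOn_phi hm).tendsto_of_tendsto_comp ordConnected_Ioi
      (Eventually.of_forall fun t => (hR t).1) (hR s).1
      (by simpa only [(hR _).2] using hg.tendsto s)

theorem continuousAt_Fc {m c : ℝ} (hm : 0 < m) {s r h : ℝ} (hr : 0 < r) :
    ContinuousAt (fun p : ℝ × ℝ × ℝ => Fc m c p.1 p.2.1 p.2.2) (s, r, h) := by
  unfold Fc phiR
  fun_prop (disch := simp [hm.ne', hr.ne', Real.exp_ne_zero])

theorem Fc_neg_one {m c s r : ℝ} (hm : m ≠ 0) (hr : r ≠ 0) :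
    Fc m c s r (-1) = c ^ 2 * (s - 1) / (8 * m * r) := by
  have hsqrt : √(2 * m * (1 - (-1) ^ 2) / phiR m r + (-1) ^ 2 / 4) = 1 / 2 := by
    rw [show 2 * m * (1 - (-1 : ℝ) ^ 2) / phiR m r + (-1) ^ 2 / 4 = (1 / 2) ^ 2 by norm_num]
    exact Real.sqrt_sq (by norm_num)
  unfold Fc
  rw [hsqrt]
  norm_num
  field_simp
  ring

theorem tendsto_Fc {m c : ℝ} (hm : 0 < m) {l : Filter ℝ} {R h : ℝ → ℝ} {s₀ r₀ h₀ : ℝ}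
    (hr₀ : 0 < r₀) (hs : Tendsto id l (𝓝 s₀)) (hR : Tendsto R l (𝓝 r₀))
    (hh : Tendsto h l (𝓝 h₀)) :
    Tendsto (fun s => Fc m c s (R s) (h s)) l (𝓝 (Fc m c s₀ r₀ h₀)) :=
  ((continuousAt_Fc hm hr₀).tendsto.comp (hs.prodMk_nhds (hR.prodMk_nhds hh)) :)

theorem mul_sub_le_one_sub_sq {h h' : ℝ → ℝ} {a b κ : ℝ} (hκ : 0 ≤ κ)
    (hderiv : ∀ x ∈ Icc a b, HasDerivWithinAt h (h' x) (Icc a b) x)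
    (hh' : ∀ x ∈ Icc a b, h' x ≤ -κ) (hh : ∀ x ∈ Icc a b, h x ≤ -1 / 2) (hb : h b = -1)
    {s : ℝ} (hs : s ∈ Icc a b) : κ * (b - s) ≤ 1 - h s ^ 2 := by
  have hderiv' : ∀ x ∈ Ioo a b, HasDerivAt (fun s => 1 - h s ^ 2) (-(2 * h x * h' x)) x := by
    intro x hx
    have hx' := (hderiv x (Ioo_subset_Icc_self hx)).hasDerivAt (Icc_mem_nhds hx.1 hx.2)
    exact ((hx'.fun_pow 2).const_sub 1).congr_deriv (by norm_num)
  have hcont : ContinuousOn (fun s => 1 - h s ^ 2) (Icc a b) :=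
    continuousOn_const.sub ((HasDerivWithinAt.continuousOn hderiv).pow 2)
  have key := (convex_Icc a b).image_sub_le_mul_sub_of_deriv_le hcont
    (fun x hx => (hderiv' x (by rwa [interior_Icc] at hx)).differentiableAt.differentiableWithinAt)
    (C := -κ) (fun x hx => by
      rw [interior_Icc] at hx
      have hx' := Ioo_subset_Icc_self hx
      rw [(hderiv' x hx).deriv]
      nlinarith [hh x hx', hh' x hx'])
    s hs b ⟨hs.1.trans hs.2, le_rfl⟩ hs.2
  simp only [hb] at key
  linarith

theorem exists_mul_sub_le_one_sub_sq {h F : ℝ → ℝ} {a b L : ℝ} (hab : a < b)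
    (hderiv : ∀ x ∈ Icc a b, HasDerivWithinAt h (F x) (Icc a b) x)
    (hF : Tendsto F (𝓝[Icc a b] b) (𝓝 L)) (hL : L < 0) (hb : h b = -1) :
    ∃ κ > 0, ∃ a' < b, ∀ s ∈ Icc a' b, κ * (b - s) ≤ 1 - h s ^ 2 := by
  have hhb : Tendsto h (𝓝[Icc a b] b) (𝓝 (-1)) :=
    hb ▸ (hderiv b ⟨hab.le, le_rfl⟩).continuousWithinAt
  have hnear : ∀ᶠ x in 𝓝[≤] b, F x ≤ L / 2 ∧ h x ≤ -1 / 2 := by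
    rw [← nhdsWithin_Icc_eq_nhdsLE hab]
    exact (hF.eventually (eventually_le_nhds (by linarith))).and
      (hhb.eventually (eventually_le_nhds (by norm_num)))
  obtain ⟨l, hl, hlb⟩ := (mem_nhdsLE_iff_exists_mem_Ico_Ioc_subset hab).mp hnear
  have hsub : Icc ((l + b) / 2) b ⊆ Ioc l b ∩ Icc a b := fun x hx =>
    ⟨⟨by linarith [hx.1, hl.2], hx.2⟩, ⟨by linarith [hx.1, hl.1, hl.2], hx.2⟩⟩
  refine ⟨-L / 2, by linarith, (l + b) / 2, by linarith [hl.2], fun s hs => ?_⟩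
  refine mul_sub_le_one_sub_sq (by linarith)
    (fun x hx => (hderiv x (hsub hx).2).mono fun y hy => (hsub hy).2)
    (fun x hx => by linarith [(hlb (hsub hx).1).1]) (fun x hx => (hlb (hsub hx).1).2) hb hs

theorem neg_inv_sqrt_div_sqrt_le {x κ t : ℝ} (hκ : 0 < κ) (ht : 0 < t)
    (hx : κ * t ≤ 1 - x ^ 2) : -(√κ)⁻¹ / √t ≤ x / √(1 - x ^ 2) := by
  have hpos : 0 < √(1 - x ^ 2) := Real.sqrt_pos.mpr (by nlinarith [mul_pos hκ ht])
  have hx1 : -1 ≤ x := by nlinarith [mul_pos hκ ht]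
  calc -(√κ)⁻¹ / √t = -(1 / √(κ * t)) := by
        rw [Real.sqrt_mul hκ.le]; field_simp
    _ ≤ -(1 / √(1 - x ^ 2)) :=
        neg_le_neg (one_div_le_one_div_of_le (by positivity) (Real.sqrt_le_sqrt hx))
    _ ≤ x / √(1 - x ^ 2) := by
        rw [← neg_div]; exact div_le_div_of_nonneg_right hx1 hpos.le

theorem exists_neg_div_sqrt_le_of_mul_sub_le {h : ℝ → ℝ} {c κ s₀ s₁ : ℝ} (hc : 0 < c)
    (hκ : 0 < κ) (hs₁ : s₁ < s₀) (hbound : ∀ s ∈ Icc s₁ s₀, κ * (s₀ - s) ≤ 1 - h s ^ 2) :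
    ∃ K > 0, ∃ ε > 0, ∀ u ∈ Ico (c * (s₀ - 1) / 2 - ε) (c * (s₀ - 1) / 2),
      -K / √(c * (s₀ - 1) / 2 - u) ≤ h ((2 / c) * u + 1) / √(1 - h ((2 / c) * u + 1) ^ 2) := by
  refine ⟨(√(2 * κ / c))⁻¹, by positivity, c * (s₀ - s₁) / 2,
    div_pos (mul_pos hc (sub_pos.2 hs₁)) two_pos, fun u hu => ?_⟩
  have hs_sub : ∀ t, t - ((2 / c) * u + 1) = (2 / c) * (c * (t - 1) / 2 - u) := fun t => by
    field_simp; ring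
  have hs_mem : (2 / c) * u + 1 ∈ Icc s₁ s₀ := by
    have h2c : 0 < 2 / c := by positivity
    constructor
    · rw [← sub_nonpos, hs_sub]
      exact mul_nonpos_of_nonneg_of_nonpos h2c.le (by linarith [hu.1])
    · rw [← sub_nonneg, hs_sub]
      exact mul_nonneg h2c.le (by linarith [hu.2])
  refine neg_inv_sqrt_div_sqrt_le (by positivity) (sub_pos.2 hu.2) ?_
  calc 2 * κ / c * (c * (s₀ - 1) / 2 - u) = κ * (s₀ - ((2 / c) * u + 1)) := by
        rw [hs_sub]; ring
    _ ≤ _ := hbound _ hs_mem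

theorem blowup_rate_general (m c : ℝ) (hm : 0 < m) (hc : c ∈ Set.Ioo 0 (cCrit m))
    (Rc : ℝ → ℝ)
    (hRc : ∀ s, 0 < Rc s ∧ phi m (Rc s) = c^2/4 * (s^2 - 1))
    (s₀ : ℝ) (hs₀ : s₀ ∈ Set.Ioo (0:ℝ) 1)
    (h : ℝ → ℝ)
    (hsol : ∀ s ∈ Set.Icc (0:ℝ) s₀,
      HasDerivWithinAt h (Fc m c s (Rc s) (h s)) (Set.Icc (0:ℝ) s₀) s)
    (hend : h s₀ = -1)
    (f' : ℝ → ℝ)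
    (hf'def : ∀ u, f' u = h ((2/c)*u + 1) / Real.sqrt (1 - (h ((2/c)*u + 1))^2)) :
    ∃ K > 0, ∃ ε > 0, ∀ u ∈ Set.Ico (c*(s₀-1)/2 - ε) (c*(s₀-1)/2),
      -K / Real.sqrt (c*(s₀-1)/2 - u) ≤ f' u := by
  obtain ⟨hc, -⟩ := hc
  have hR₀ := (hRc s₀).1
  have hRcont : Continuous Rc := continuous_of_phi_eq hm (by fun_prop) hRc
  have hFlim : Tendsto (fun s => Fc m c s (Rc s) (h s)) (𝓝[Icc 0 s₀] s₀)
      (𝓝 (Fc m c s₀ (Rc s₀) (-1))) :=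
    tendsto_Fc hm hR₀ (tendsto_id.mono_left nhdsWithin_le_nhds)
      ((hRcont.tendsto s₀).mono_left nhdsWithin_le_nhds)
      (hend ▸ (hsol s₀ ⟨hs₀.1.le, le_rfl⟩).continuousWithinAt)
  have hFneg : Fc m c s₀ (Rc s₀) (-1) < 0 := by
    rw [Fc_neg_one hm.ne' hR₀.ne']
    exact div_neg_of_neg_of_pos (mul_neg_of_pos_of_neg (by positivity) (by linarith [hs₀.2]))
      (by positivity)
  obtain ⟨κ, hκ, s₁, hs₁, hbound⟩ := exists_mul_sub_le_one_sub_sq hs₀.1 hsol hFlim hFneg hend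
  simpa only [hf'def] using exists_neg_div_sqrt_le_of_mul_sub_le hc hκ hs₁ hbound

/-- Near the blowup point `u₀ = c(s₀-1)/2`, the derivative of the blowup
solution satisfies `f'(u) ≥ -K/√(u₀ - u)` for `u ∈ [u₀ - ε, u₀)`. -/
theorem blowup_rate (m c : ℝ) (hm : 0 < m) (hc : c ∈ Set.Ioo 0 (cCrit m))
    (Rc : ℝ → ℝ)
    (hRc : ∀ s, 0 < Rc s ∧ phi m (Rc s) = c^2/4 * (s^2 - 1))
    (s₀ : ℝ) (hs₀ : s₀ ∈ Set.Ioo (0:ℝ) 1)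
    (h : ℝ → ℝ)
    (hrange : ∀ s ∈ Set.Icc (0:ℝ) s₀, h s ∈ Set.Icc (-1:ℝ) 1)
    (hsol : ∀ s ∈ Set.Icc (0:ℝ) s₀,
      HasDerivWithinAt h (Fc m c s (Rc s) (h s)) (Set.Icc (0:ℝ) s₀) s)
    (hinit : h 0 = 0)
    (hlt : ∀ s ∈ Set.Ico (0:ℝ) s₀, |h s| < 1)
    (hend : h s₀ = -1)
    (f f' : ℝ → ℝ)
    (hf'def : ∀ u, f' u = h ((2/c)*u + 1) / Real.sqrt (1 - (h ((2/c)*u + 1))^2))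
    (hf : ∀ u ∈ Set.Ico (-c/2) (c*(s₀-1)/2),
      HasDerivWithinAt f (f' u) (Set.Ico (-c/2) (c*(s₀-1)/2)) u)
    (hf0 : f (-c/2) = 0) :
    ∃ K > 0, ∃ ε > 0, ∀ u ∈ Set.Ico (c*(s₀-1)/2 - ε) (c*(s₀-1)/2),
      -K / Real.sqrt (c*(s₀-1)/2 - u) ≤ f' u :=
  blowup_rate_general m c hm hc Rc hRc s₀ hs₀ h hsol hend f' hf'def
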